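/- In the agnostic setting, under the hypotheses of the ExpAT algorithm with parameters η ∈ (0,1), L > 1 and n ≤ ηLT/2^{k+1}, on any k-realizable sequence the number of false negatives satisfies M₋ ≤ (log₂ L)/η + k + 1 and the number of false positives satisfies M₊ ≤ 200ηT. -/

import Mathlib

/-!
False negatives: an expert `j` with at most `k` mistakes is never removed, because its budget only
drops on rounds where it errs. On a false negative where `j` predicts `1`, its weight `2^{η d_j}` is
below `L`, so `η d_j < log₂ L`, and `d_j` strictly increases at each such round; every other false
negative is a mistake of `j`.

False positives: the potential `Φ = ∑_{j ∈ V} 2^{k_j + η d_j}` grows by at most `(2^η - 1) L ≤ η L`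
when the learner predicts `0`, and drops by at least `L / 2` on a false positive, since the experts
predicting `1` carry weight at least `L` and each of them is halved or removed. As `Φ ≥ 0` and
`Φ₀ = n 2^k ≤ η L T / 2`, this gives `M₊ ≤ 3 η T`.
-/

open Finset

theorem two_rpow_le_one_add {η : ℝ} (h0 : 0 ≤ η) (h1 : η ≤ 1) : (2 : ℝ) ^ η ≤ 1 + η := by
  simpa [one_add_one_eq_two] using rpow_one_add_le_one_add_mul_self (s := 1) (by norm_num) h0 h1

theorem mul_card_le_of_potential_step {T : ℕ} (W : ℕ → ℝ) (c d : ℝ) (s : Finset (Fin T))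
    (hstep : ∀ t : Fin T, W (t + 1) ≤ W t + c - if t ∈ s then d else 0) (hT : 0 ≤ W T) :
    d * #s ≤ W 0 + c * T := by
  have htel : ∑ t : Fin T, (W (t + 1) - W t) = W T - W 0 :=
    (Fin.sum_univ_eq_sum_range (fun i => W (i + 1) - W i) T).trans (sum_range_sub W T)
  have hsum : ∑ t : Fin T, (W (t + 1) - W t) ≤ ∑ t : Fin T, (c - if t ∈ s then d else 0) :=
    sum_le_sum fun t _ => by linarith [hstep t]
  rw [htel, sum_sub_distrib, sum_ite_mem, univ_inter] at hsum
  simp only [sum_const, card_univ, Fintype.card_fin, nsmul_eq_mul] at hsum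
  linarith

theorem card_filter_val_lt_succ {T m : ℕ} (P : Fin T → Prop) [DecidablePred P] (hm : m < T) :
    #{t : Fin T | (t : ℕ) < m + 1 ∧ P t} = #{t : Fin T | (t : ℕ) < m ∧ P t}
      + if P ⟨m, hm⟩ then 1 else 0 := by
  have hone : (if P ⟨m, hm⟩ then 1 else 0) = ∑ t : Fin T, if t = ⟨m, hm⟩ ∧ P t then 1 else 0 := by
    simp [ite_and]
  simp only [card_filter]
  rw [hone, ← sum_add_distrib]
  refine sum_congr rfl fun t _ => ?_
  rcases lt_trichotomy (t : ℕ) m with h | h | h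
  · have : t ≠ ⟨m, hm⟩ := fun e => by simp [e] at h
    simp [h, Nat.lt_succ_of_lt h, this]
  · obtain rfl : t = ⟨m, hm⟩ := Fin.ext h
    simp
  · have : t ≠ ⟨m, hm⟩ := fun e => by simp [e] at h
    simp [h.not_gt, h.not_ge, this]

noncomputable def expWeight (η : ℝ) (b d : ℕ) : ℝ := 2 ^ ((b : ℝ) + η * d)

theorem expWeight_pos (η : ℝ) (b d : ℕ) : 0 < expWeight η b d := by
  unfold expWeight; positivity

section expWeight
variable {ι : Type*} {η : ℝ}

theorem expWeight_dist_succ (b d : ℕ) : expWeight η b (d + 1) = 2 ^ η * expWeight η b d := by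
  rw [expWeight, expWeight, ← Real.rpow_add two_pos]
  push_cast
  ring_nf

theorem expWeight_budget_pred {b : ℕ} (hb : b ≠ 0) (d : ℕ) :
    expWeight η (b - 1) d = expWeight η b d / 2 := by
  rw [expWeight, expWeight, Nat.cast_pred (Nat.pos_of_ne_zero hb),
    show (b : ℝ) - 1 + η * d = (b + η * d) - 1 by ring, Real.rpow_sub two_pos, Real.rpow_one]

theorem two_rpow_mul_le_expWeight (b d : ℕ) : (2 : ℝ) ^ (η * d) ≤ expWeight η b d :=
  Real.rpow_le_rpow_of_exponent_le one_le_two (by simp)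

theorem sum_expWeight_shift_le (h0 : 0 ≤ η) (h1 : η ≤ 1) (S : Finset ι) (P : ι → Prop)
    [DecidablePred P] (b d : ι → ℕ) :
    ∑ j ∈ S, expWeight η (b j) (d j + if P j then 1 else 0)
      ≤ ∑ j ∈ S, expWeight η (b j) (d j) + η * ∑ j ∈ S with P j, expWeight η (b j) (d j) := by
  rw [sum_filter, mul_sum, ← sum_add_distrib]
  refine sum_le_sum fun j _ => ?_
  split_ifs
  · rw [expWeight_dist_succ]
    nlinarith [two_rpow_le_one_add h0 h1, expWeight_pos η (b j) (d j)]
  · simp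

theorem sum_expWeight_penalize_le (S : Finset ι) (P : ι → Prop) [DecidablePred P]
    (b d : ι → ℕ) :
    ∑ j ∈ S with ¬(P j ∧ b j = 0), expWeight η (b j - if P j then 1 else 0) (d j)
      ≤ ∑ j ∈ S, expWeight η (b j) (d j) - (∑ j ∈ S with P j, expWeight η (b j) (d j)) / 2 := by
  rw [sum_filter, sum_filter, sum_div, ← sum_sub_distrib]
  refine sum_le_sum fun j _ => ?_
  have hw := expWeight_pos η (b j) (d j)
  by_cases hP : P j <;> by_cases hb : b j = 0 <;>
    simp [hP, hb, expWeight_budget_pred] at hw ⊢ <;> linarith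

end expWeight

structure IsExpATRun {n T : ℕ} (k : ℕ) (η L : ℝ) (p : Fin T → Fin n → Bool) (y : Fin T → Bool)
    (V : ℕ → Finset (Fin n)) (dist kb : ℕ → Fin n → ℕ) (yhat : Fin T → Bool) : Prop where
  V_zero : V 0 = univ
  dist_zero : ∀ j, dist 0 j = 0
  kb_zero : ∀ j, kb 0 j = k
  yhat_iff : ∀ t : Fin T, yhat t = true ↔
    L ≤ ∑ j ∈ V t with p t j = true, expWeight η (kb t j) (dist t j)
  step_of_yhat_true : ∀ t : Fin T, yhat t = true →
    (∀ j, dist (t + 1) j = dist t j) ∧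
    (if y t = true then
        V (t + 1) = V t ∧ ∀ j, kb (t + 1) j = kb t j
      else
        V (t + 1) = {j ∈ V t | ¬(p t j = true ∧ kb t j = 0)} ∧
        ∀ j, kb (t + 1) j = kb t j - (if p t j = true then 1 else 0))
  step_of_yhat_false : ∀ t : Fin T, yhat t = false →
    V (t + 1) = V t ∧ (∀ j, kb (t + 1) j = kb t j) ∧
    ∀ j, dist (t + 1) j = dist t j + (if p t j = true then 1 else 0)

noncomputable def expATPotential {n : ℕ} (η : ℝ) (V : ℕ → Finset (Fin n))
    (dist kb : ℕ → Fin n → ℕ) (m : ℕ) : ℝ :=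
  ∑ j ∈ V m, expWeight η (kb m j) (dist m j)

namespace IsExpATRun

variable {n T k : ℕ} {η L : ℝ} {p : Fin T → Fin n → Bool} {y : Fin T → Bool}
  {V : ℕ → Finset (Fin n)} {dist kb : ℕ → Fin n → ℕ} {yhat : Fin T → Bool}

theorem step_of_truePos (run : IsExpATRun k η L p y V dist kb yhat) {t : Fin T}
    (hŷ : yhat t = true) (hy : y t = true) :
    V (t + 1) = V t ∧ (∀ j, kb (t + 1) j = kb t j) ∧ ∀ j, dist (t + 1) j = dist t j := by
  obtain ⟨hdist, hstep⟩ := run.step_of_yhat_true t hŷ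
  rw [if_pos hy] at hstep
  exact ⟨hstep.1, hstep.2, hdist⟩

theorem step_of_falsePos (run : IsExpATRun k η L p y V dist kb yhat) {t : Fin T}
    (hŷ : yhat t = true) (hy : y t = false) :
    V (t + 1) = {j ∈ V t | ¬(p t j = true ∧ kb t j = 0)} ∧
      (∀ j, kb (t + 1) j = kb t j - (if p t j = true then 1 else 0)) ∧
      ∀ j, dist (t + 1) j = dist t j := by
  obtain ⟨hdist, hstep⟩ := run.step_of_yhat_true t hŷ
  rw [if_neg (by simp [hy])] at hstep
  exact ⟨hstep.1, hstep.2, hdist⟩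

theorem sum_lt_of_yhat_false (run : IsExpATRun k η L p y V dist kb yhat) {t : Fin T}
    (hŷ : yhat t = false) :
    ∑ j ∈ V t with p t j = true, expWeight η (kb t j) (dist t j) < L :=
  not_le.1 fun h => by simpa [hŷ] using (run.yhat_iff t).2 h

theorem potential_succ_le_of_yhat_false (run : IsExpATRun k η L p y V dist kb yhat)
    (h0 : 0 ≤ η) (h1 : η ≤ 1) {t : Fin T} (hŷ : yhat t = false) :
    expATPotential η V dist kb (t + 1) ≤ expATPotential η V dist kb t + η * L := by
  obtain ⟨hV, hkb, hdist⟩ := run.step_of_yhat_false t hŷ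
  calc expATPotential η V dist kb (t + 1)
      ≤ expATPotential η V dist kb t
          + η * ∑ j ∈ V t with p t j = true, expWeight η (kb t j) (dist t j) := by
        simp only [expATPotential, hV, hkb, hdist]
        exact sum_expWeight_shift_le h0 h1 _ _ _ _
    _ ≤ expATPotential η V dist kb t + η * L := by
        gcongr
        exact (run.sum_lt_of_yhat_false hŷ).le

theorem potential_succ_eq_of_truePos (run : IsExpATRun k η L p y V dist kb yhat) {t : Fin T}
    (hŷ : yhat t = true) (hy : y t = true) :
    expATPotential η V dist kb (t + 1) = expATPotential η V dist kb t := by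
  obtain ⟨hV, hkb, hdist⟩ := run.step_of_truePos hŷ hy
  simp only [expATPotential, hV, hkb, hdist]

theorem potential_succ_le_of_falsePos (run : IsExpATRun k η L p y V dist kb yhat) {t : Fin T}
    (hŷ : yhat t = true) (hy : y t = false) :
    expATPotential η V dist kb (t + 1) ≤ expATPotential η V dist kb t - L / 2 := by
  obtain ⟨hV, hkb, hdist⟩ := run.step_of_falsePos hŷ hy
  have hL := (run.yhat_iff t).1 hŷ
  calc expATPotential η V dist kb (t + 1)
      ≤ expATPotential η V dist kb t
          - (∑ j ∈ V t with p t j = true, expWeight η (kb t j) (dist t j)) / 2 := by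
        simp only [expATPotential, hV, hkb, hdist]
        exact sum_expWeight_penalize_le _ _ _ _
    _ ≤ expATPotential η V dist kb t - L / 2 := by linarith

theorem potential_succ_le (run : IsExpATRun k η L p y V dist kb yhat) (h0 : 0 ≤ η)
    (h1 : η ≤ 1) (hL : 0 ≤ L) (t : Fin T) :
    expATPotential η V dist kb (t + 1) ≤ expATPotential η V dist kb t + η * L
      - if yhat t = true ∧ y t = false then L / 2 else 0 := by
  have hηL : 0 ≤ η * L := mul_nonneg h0 hL
  cases hŷ : yhat t <;> cases hy : y t <;> simp only [Bool.false_eq_true,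
    Bool.true_eq_false, false_and, true_and, and_false, if_false, if_true, sub_zero]
  · linarith [run.potential_succ_le_of_yhat_false h0 h1 hŷ]
  · linarith [run.potential_succ_le_of_yhat_false h0 h1 hŷ]
  · linarith [run.potential_succ_le_of_falsePos hŷ hy]
  · linarith [run.potential_succ_eq_of_truePos hŷ hy]

theorem potential_zero (run : IsExpATRun k η L p y V dist kb yhat) :
    expATPotential η V dist kb 0 = n * 2 ^ k := by
  simp [expATPotential, expWeight, run.V_zero, run.kb_zero, run.dist_zero]

theorem card_falsePos_le (run : IsExpATRun k η L p y V dist kb yhat) (hη : η ∈ Set.Ioo 0 1)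
    (hL : 0 < L) (hn : (n : ℝ) ≤ η * L * T / 2 ^ (k + 1)) :
    (#{t | yhat t = true ∧ y t = false} : ℝ) ≤ 3 * η * T := by
  have hpot := mul_card_le_of_potential_step (expATPotential η V dist kb) (η * L) (L / 2)
    {t | yhat t = true ∧ y t = false}
    (fun t => by simpa only [mem_filter, mem_univ, true_and]
      using run.potential_succ_le hη.1.le hη.2.le hL.le t)
    (sum_nonneg fun j _ => (expWeight_pos _ _ _).le)
  have hinit : (n : ℝ) * 2 ^ k ≤ η * L * T / 2 := by
    rw [le_div_iff₀ (by positivity), pow_succ] at hn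
    linarith
  rw [run.potential_zero] at hpot
  have hhalf : 0 < L / 2 := by positivity
  exact le_of_mul_le_mul_left (by linarith) hhalf

theorem mem_V_succ (run : IsExpATRun k η L p y V dist kb yhat) {t : Fin T} {j : Fin n}
    (hj : j ∈ V t) (hkb : p t j ≠ y t → kb t j ≠ 0) : j ∈ V (t + 1) := by
  cases hŷ : yhat t
  · rwa [(run.step_of_yhat_false t hŷ).1]
  cases hy : y t
  · rw [(run.step_of_falsePos hŷ hy).1, mem_filter]
    exact ⟨hj, fun ⟨hp, h0⟩ => hkb (by simp [hp, hy]) h0⟩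
  · rwa [(run.step_of_truePos hŷ hy).1]

theorem kb_le_kb_succ_add (run : IsExpATRun k η L p y V dist kb yhat) (t : Fin T) (j : Fin n) :
    kb t j ≤ kb (t + 1) j + if p t j ≠ y t then 1 else 0 := by
  cases hŷ : yhat t
  · simp [(run.step_of_yhat_false t hŷ).2.1]
  cases hy : y t
  · rw [(run.step_of_falsePos hŷ hy).2.1]
    cases p t j <;> simp
    omega
  · simp [(run.step_of_truePos hŷ hy).2.1]

theorem mem_V_and_le_kb_add_card (run : IsExpATRun k η L p y V dist kb yhat) {j : Fin n}
    (hj : #{t | p t j ≠ y t} ≤ k) :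
    ∀ m ≤ T, j ∈ V m ∧ k ≤ kb m j + #{t : Fin T | (t : ℕ) < m ∧ p t j ≠ y t} := by
  intro m
  induction m with
  | zero => simp [run.V_zero, run.kb_zero]
  | succ m ih =>
    intro hm
    obtain ⟨hjV, hbudget⟩ := ih (by omega)
    have hcount : #{t : Fin T | (t : ℕ) < m + 1 ∧ p t j ≠ y t}
        = #{t : Fin T | (t : ℕ) < m ∧ p t j ≠ y t} + if p ⟨m, hm⟩ j ≠ y ⟨m, hm⟩ then 1 else 0 :=
      card_filter_val_lt_succ (fun t => p t j ≠ y t) hm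
    have hle : #{t : Fin T | (t : ℕ) < m + 1 ∧ p t j ≠ y t} ≤ k :=
      (card_le_card fun t => by simp only [mem_filter]; tauto).trans hj
    have hkb : kb m j ≤ kb (m + 1) j + if p ⟨m, hm⟩ j ≠ y ⟨m, hm⟩ then 1 else 0 :=
      run.kb_le_kb_succ_add ⟨m, hm⟩ j
    refine ⟨run.mem_V_succ (t := ⟨m, hm⟩) hjV fun herr => ?_, ?_⟩
    · rw [if_pos herr] at hcount
      show kb m j ≠ 0
      omega
    · split_ifs at hcount hkb <;> omega

theorem mem_V (run : IsExpATRun k η L p y V dist kb yhat) {j : Fin n}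
    (hj : #{t | p t j ≠ y t} ≤ k) (t : Fin T) : j ∈ V t :=
  (run.mem_V_and_le_kb_add_card hj t t.isLt.le).1

theorem dist_le_dist_succ (run : IsExpATRun k η L p y V dist kb yhat) (t : Fin T) (j : Fin n) :
    dist t j ≤ dist (t + 1) j := by
  cases hŷ : yhat t
  · simp [(run.step_of_yhat_false t hŷ).2.2]
  · simp [(run.step_of_yhat_true t hŷ).1]

theorem dist_lt_dist_succ (run : IsExpATRun k η L p y V dist kb yhat) {t : Fin T} {j : Fin n}
    (hŷ : yhat t = false) (hp : p t j = true) : dist t j < dist (t + 1) j := by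
  simp [(run.step_of_yhat_false t hŷ).2.2, hp]

theorem monotoneOn_dist (run : IsExpATRun k η L p y V dist kb yhat) (j : Fin n) :
    MonotoneOn (fun m => dist m j) (Set.Iic T) :=
  monotoneOn_of_le_succ Set.ordConnected_Iic fun m _ _ hm =>
    run.dist_le_dist_succ ⟨m, Order.succ_le_iff.1 hm⟩ j

theorem mul_dist_lt_logb (run : IsExpATRun k η L p y V dist kb yhat) (hL : 0 < L) {t : Fin T}
    {j : Fin n} (hjV : j ∈ V t) (hŷ : yhat t = false) (hp : p t j = true) :
    η * dist t j < Real.logb 2 L := by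
  rw [Real.lt_logb_iff_rpow_lt one_lt_two hL]
  calc (2 : ℝ) ^ (η * dist t j) ≤ expWeight η (kb t j) (dist t j) := two_rpow_mul_le_expWeight _ _
    _ ≤ ∑ i ∈ V t with p t i = true, expWeight η (kb t i) (dist t i) :=
        single_le_sum (fun i _ => (expWeight_pos _ _ _).le) (mem_filter.2 ⟨hjV, hp⟩)
    _ < L := run.sum_lt_of_yhat_false hŷ

theorem card_falseNeg_of_predicts_le (run : IsExpATRun k η L p y V dist kb yhat) (hη : 0 < η)
    (hL : 0 < L) {j : Fin n} (hjV : ∀ t : Fin T, j ∈ V t) :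
    #{t | (yhat t = false ∧ y t = true) ∧ p t j = true} ≤ ⌊Real.logb 2 L / η⌋₊ + 1 := by
  set S : Finset (Fin T) := {t | (yhat t = false ∧ y t = true) ∧ p t j = true}
  have hS : ∀ t ∈ S, yhat t = false ∧ p t j = true := fun t ht => by
    simp only [S, mem_filter, mem_univ, true_and] at ht
    exact ⟨ht.1.1, ht.2⟩
  have hmono : StrictMonoOn (fun t : Fin T => dist t j) S := by
    intro a ha b _ hab
    have hab' : (a : ℕ) + 1 ≤ b := hab
    calc dist a j < dist (a + 1) j := run.dist_lt_dist_succ (hS a ha).1 (hS a ha).2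
      _ ≤ dist b j := run.monotoneOn_dist j (Set.mem_Iic.2 (hab'.trans b.isLt.le))
          (Set.mem_Iic.2 b.isLt.le) hab'
  have hmaps : ∀ t ∈ S, dist t j ∈ range (⌊Real.logb 2 L / η⌋₊ + 1) := fun t ht => by
    rw [mem_range, Nat.lt_succ_iff]
    refine Nat.le_floor ((le_div_iff₀ hη).2 ?_)
    linarith [run.mul_dist_lt_logb hL (hjV t) (hS t ht).1 (hS t ht).2]
  simpa using card_le_card_of_injOn _ hmaps hmono.injOn

theorem card_falseNeg_le (run : IsExpATRun k η L p y V dist kb yhat) (hη : 0 < η) (hL : 1 < L)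
    {j : Fin n} (hj : #{t | p t j ≠ y t} ≤ k) :
    (#{t | yhat t = false ∧ y t = true} : ℝ) ≤ Real.logb 2 L / η + k + 1 := by
  have hcover : #{t | yhat t = false ∧ y t = true}
      ≤ #{t | (yhat t = false ∧ y t = true) ∧ p t j = true} + #{t | p t j ≠ y t} := by
    refine (card_le_card fun t ht => ?_).trans (card_union_le _ _)
    simp only [mem_union, mem_filter, mem_univ, true_and] at ht ⊢
    cases hp : p t j <;> simp_all
  have hpred := run.card_falseNeg_of_predicts_le hη (by linarith) (run.mem_V hj)
  have hfloor := Nat.floor_le (div_pos (Real.logb_pos one_lt_two hL) hη).le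
  calc (#{t | yhat t = false ∧ y t = true} : ℝ)
      ≤ #{t | (yhat t = false ∧ y t = true) ∧ p t j = true} + #{t | p t j ≠ y t} := by
        exact_mod_cast hcover
    _ ≤ (⌊Real.logb 2 L / η⌋₊ + 1 : ℕ) + k := by gcongr
    _ ≤ Real.logb 2 L / η + k + 1 := by push_cast; linarith

end IsExpATRun

/-- Mistake bounds of `ExpAT` (agnostic case). State: version space `V`, distances `dist`,
false-positive budgets `kb` (initially `k`), predictions `yhat` (predict `1` iff the total
weight `2^{budget + η·distance}` of alive experts predicting `1` reaches the threshold `L`).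
On a `k`-realizable sequence, under `η ∈ (0,1)`, `L > 1` and `n ≤ ηLT/2^{k+1}`, the number
of false negatives is at most `log₂ L / η + k + 1` and the number of false positives is at
most `200ηT`. -/
theorem expAT_mistake_bounds
    (n T k : ℕ) (η L : ℝ) (hη : η ∈ Set.Ioo (0 : ℝ) 1) (hL : 1 < L)
    (hn : (n : ℝ) ≤ η * L * T / 2 ^ (k + 1))
    (p : Fin T → Fin n → Bool) (y : Fin T → Bool)
    (hkreal : ∃ j : Fin n,
      (Finset.univ.filter (fun t : Fin T => p t j ≠ y t)).card ≤ k)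
    (V : ℕ → Finset (Fin n)) (dist : ℕ → Fin n → ℕ) (kb : ℕ → Fin n → ℕ)
    (hV0 : V 0 = Finset.univ) (hdist0 : ∀ j, dist 0 j = 0) (hkb0 : ∀ j, kb 0 j = k)
    (yhat : Fin T → Bool)
    (hyhat : ∀ t : Fin T, yhat t = true ↔
      L ≤ ∑ j ∈ (V t.val).filter (fun j => p t j = true),
            (2 : ℝ) ^ ((kb t.val j : ℝ) + η * dist t.val j))
    (hup1 : ∀ t : Fin T, yhat t = true →
      (∀ j, dist (t.val + 1) j = dist t.val j) ∧
      (if y t = true then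
          V (t.val + 1) = V t.val ∧ ∀ j, kb (t.val + 1) j = kb t.val j
        else
          V (t.val + 1) =
            (V t.val).filter (fun j => ¬(p t j = true ∧ kb t.val j = 0)) ∧
          ∀ j, kb (t.val + 1) j = kb t.val j - (if p t j = true then 1 else 0)))
    (hup0 : ∀ t : Fin T, yhat t = false →
      V (t.val + 1) = V t.val ∧ (∀ j, kb (t.val + 1) j = kb t.val j) ∧
      ∀ j, dist (t.val + 1) j = dist t.val j + (if p t j = true then 1 else 0)) :
    ((Finset.univ.filter (fun t : Fin T => yhat t = false ∧ y t = true)).card : ℝ)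
        ≤ Real.logb 2 L / η + k + 1 ∧
    ((Finset.univ.filter (fun t : Fin T => yhat t = true ∧ y t = false)).card : ℝ)
        ≤ 200 * η * T := by
  have run : IsExpATRun k η L p y V dist kb yhat := ⟨hV0, hdist0, hkb0, hyhat, hup1, hup0⟩
  obtain ⟨j, hj⟩ := hkreal
  refine ⟨run.card_falseNeg_le hη.1 hL hj, ?_⟩
  calc _ ≤ 3 * η * T := run.card_falsePos_le hη (by linarith) hn
    _ ≤ 200 * η * T := by have := hη.1.le; gcongr; norm_num
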